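/- Let K be an algebraically closed field and n ≥ 2. The ideal (det − 1, Δ_{n-1}) of K[Mat_n] is a prime ideal; equivalently, the image of Δ_{n-1} in K[SL_n] generates a prime ideal. -/

import Mathlib

open MvPolynomial

/-- The determinant of the generic `n × n` matrix in `K[Mat_n] = K[ξ_{ij}]`. -/
noncomputable def genDet (K : Type*) [CommRing K] (n : ℕ) :
    MvPolynomial (Fin n × Fin n) K :=
  Matrix.det (Matrix.of fun i j : Fin n => X (i, j))

/-- The `k`-th principal minor `Δ_k` of the generic `n × n` matrix. -/
noncomputable def genDelta (K : Type*) [CommRing K] (n : ℕ) (k : ℕ) (hk : k ≤ n) :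
    MvPolynomial (Fin n × Fin n) K :=
  Matrix.det (Matrix.of fun i j : Fin k => X (Fin.castLE hk i, Fin.castLE hk j))

/-!
Let `ξ` be the generic matrix and `φ` the substitution `ξ ↦ adj ξ`. Since `det (adj ξ) = det ξ ^ (n-1)`,
`adj (adj ξ) = det ξ ^ (n-2) • ξ` and `adj ξ` has `Δ_{n-1}` in its corner `(n, n)`, the map `φ` is an
involution modulo `det ξ - 1` exchanging `ξ_{nn}` and `Δ_{n-1}`; hence `(det ξ - 1, Δ_{n-1})` is the
preimage under `φ` of `(det ξ - 1, ξ_{nn})`. Modulo `ξ_{nn}` the latter becomes `(g - 1)` in the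
polynomial ring on the remaining variables, `g` being the determinant with corner entry `0`. As `g`
is nonzero and linear in the variables of the last row, scaling that row by `t` turns `g - 1` into
`g t - 1`, which is irreducible over the polynomial ring; so `g - 1` is irreducible, hence prime.
-/

open scoped Polynomial

theorem Ideal.eq_comap_of_map_le_of_sub_mem {A F : Type*} [CommRing A] [FunLike F A A]
    [RingHomClass F A A] (φ : F) {I J : Ideal A} (hIJ : I.map φ ≤ J) (hJI : J.map φ ≤ I)
    (hφφ : ∀ a, φ (φ a) - a ∈ I) : I = J.comap φ := by
  refine le_antisymm (Ideal.map_le_iff_le_comap.mp hIJ) fun a ha => ?_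
  simpa using I.sub_mem (hJI (Ideal.mem_map_of_mem φ ha)) (hφφ a)

theorem irreducible_sub_one_of_map_eq_C_mul_X {B : Type*} [CommRing B] [IsDomain B]
    (S : B →+* B[X]) (hS : Function.LeftInverse (Polynomial.evalRingHom 1) S) {g : B}
    (hg : g ≠ 0) (hSg : S g = Polynomial.C g * Polynomial.X) : Irreducible (g - 1) := by
  have := isLocalHom_of_leftInverse _ hS
  refine Irreducible.of_map (f := S) ?_
  rw [map_sub, map_one, hSg, sub_eq_add_neg, ← map_one Polynomial.C, ← map_neg]
  exact Polynomial.irreducible_C_mul_X_add_C hg isUnit_one.neg.isRelPrime_right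

namespace MvPolynomial

variable {R σ : Type*} [CommRing R]

noncomputable abbrev killVar (c : σ) : MvPolynomial σ R →ₐ[R] MvPolynomial {i // i ≠ c} R :=
  killCompl Subtype.val_injective

theorem killVar_X_self (c : σ) : killVar (R := R) c (X c) = 0 := by
  simp [killCompl]

theorem killVar_X_of_ne {c i : σ} (h : i ≠ c) : killVar (R := R) c (X i) = X ⟨i, h⟩ := by
  simpa using killCompl_rename_app (R := R) Subtype.val_injective (X (⟨i, h⟩ : {i // i ≠ c}))

theorem killVar_surjective (c : σ) : Function.Surjective (killVar (R := R) c) :=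
  fun p => ⟨rename Subtype.val p, killCompl_rename_app _ p⟩

theorem ker_killVar (c : σ) : RingHom.ker (killVar (R := R) c) = Ideal.span {X c} := by
  refine le_antisymm (fun p hp => ?_) ?_
  · have hretract : (Ideal.Quotient.mkₐ R (Ideal.span {X c})).comp
        ((rename Subtype.val).comp (killVar c)) = Ideal.Quotient.mkₐ R _ := by
      refine algHom_ext fun i => ?_
      by_cases h : i = c
      · subst h
        simp [killVar_X_self]
      · simp [killVar_X_of_ne h]
    have := AlgHom.congr_fun hretract p
    rw [AlgHom.comp_apply, AlgHom.comp_apply, RingHom.mem_ker.mp hp, map_zero, map_zero,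
      eq_comm, Ideal.Quotient.mkₐ_eq_mk, Ideal.Quotient.eq_zero_iff_mem] at this
    exact this
  · rw [Ideal.span_le, Set.singleton_subset_iff, SetLike.mem_coe, RingHom.mem_ker]
    exact killVar_X_self c

theorem isPrime_span_pair_X_of_isPrime_span_killVar {c : σ} {f : MvPolynomial σ R}
    (hf : (Ideal.span {killVar c f}).IsPrime) : (Ideal.span {f, X c}).IsPrime := by
  have : Ideal.span {f, X c} = (Ideal.span {killVar c f}).comap (killVar c) := by
    rw [← Set.image_singleton (f := killVar c), ← Ideal.map_span,
      Ideal.comap_map_of_surjective _ (killVar_surjective c), ← RingHom.ker_eq_comap_bot,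
      ker_killVar, Ideal.span_insert]
  rw [this]
  exact hf.comap _

theorem eval_killVar {c : σ} {y : σ → R} (hy : y c = 0) (p : MvPolynomial σ R) :
    eval (fun i : {i // i ≠ c} => y i) (killVar c p) = eval y p := by
  have h : (aeval (R := R) fun i : {i // i ≠ c} => y i).comp (killVar c) = aeval y := by
    refine algHom_ext fun i => ?_
    by_cases h : i = c
    · subst h
      simp [killVar_X_self, hy]
    · simp [killVar_X_of_ne h]
  simpa [coe_aeval_eq_eval] using AlgHom.congr_fun h p

noncomputable def scaleVars (P : σ → Prop) [DecidablePred P] :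
    MvPolynomial σ R →ₐ[R] (MvPolynomial σ R)[X] :=
  aeval fun i => if P i then Polynomial.C (X i) * Polynomial.X else Polynomial.C (X i)

theorem eval_one_scaleVars (P : σ → Prop) [DecidablePred P] (p : MvPolynomial σ R) :
    (scaleVars P p).eval 1 = p := by
  rw [← Polynomial.coe_evalRingHom, ← AlgHom.coe_toRingHom, ← RingHom.comp_apply]
  conv_rhs => rw [← RingHom.id_apply p]
  congr 1
  refine ringHom_ext (fun r => ?_) fun i => ?_
  · simp [scaleVars, algebraMap_eq]
  · by_cases h : P i <;> simp [scaleVars, h]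

end MvPolynomial

namespace Matrix

theorem adjugate_last_last {α : Type*} [CommRing α] {m : ℕ}
    (A : Matrix (Fin (m + 1)) (Fin (m + 1)) α) :
    adjugate A (Fin.last m) (Fin.last m) = det (A.submatrix Fin.castSucc Fin.castSucc) := by
  rw [adjugate_fin_succ_eq_det_submatrix, Fin.succAbove_last, Fin.val_last,
    Even.neg_one_pow ⟨m, rfl⟩, one_mul]

variable {ι R : Type*} [Fintype ι] [DecidableEq ι] [CommRing R]

theorem det_map_C_updateRow_X_smul (M : Matrix ι ι R) (r : ι) :
    det ((M.map Polynomial.C).updateRow r ((Polynomial.X : R[X]) • (M.map Polynomial.C) r)) =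
      Polynomial.C M.det * Polynomial.X := by
  rw [det_updateRow_smul, updateRow_eq_self, ← RingHom.mapMatrix_apply, ← RingHom.map_det,
    mul_comm]

theorem killVar_det_mvPolynomialX_ne_zero [Nontrivial ι] [Nontrivial R] (c : ι × ι) :
    killVar c (det (mvPolynomialX ι ι R)) ≠ 0 := by
  obtain ⟨j, hj⟩ := exists_ne c.2
  set P := (Equiv.swap c.1 j).permMatrix R
  have hP : P c.1 c.2 = 0 := by simp [P, PEquiv.toMatrix_apply, hj]
  intro h
  have := eval_killVar (y := fun p => P p.1 p.2) hP (det (mvPolynomialX ι ι R))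
  rw [h, map_zero, eval_det_mvPolynomialX] at this
  change (0 : R) = det P at this
  rcases Int.units_eq_one_or (Equiv.Perm.sign (Equiv.swap c.1 j)) with hs | hs <;>
    simp [P, hs] at this

theorem scaleVars_killVar_det_mvPolynomialX (c : ι × ι) :
    scaleVars (fun q : {p // p ≠ c} => q.1.1 = c.1) (killVar c (det (mvPolynomialX ι ι R))) =
      Polynomial.C (killVar c (det (mvPolynomialX ι ι R))) * Polynomial.X := by
  set N := (mvPolynomialX ι ι R).map (killVar c)
  have hN : N.map (scaleVars fun q : {p // p ≠ c} => q.1.1 = c.1) =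
      (N.map Polynomial.C).updateRow c.1
        ((Polynomial.X : (MvPolynomial {p // p ≠ c} R)[X]) • (N.map Polynomial.C) c.1) := by
    ext i j
    by_cases hij : (i, j) = c
    · subst hij
      simp [N, killVar_X_self]
    · by_cases hi : i = c.1
      · subst hi
        simp [N, killVar_X_of_ne hij, scaleVars]
      · simp [N, killVar_X_of_ne hij, scaleVars, hi]
  rw [AlgHom.map_det, AlgHom.mapMatrix_apply]
  change scaleVars _ (det N) = Polynomial.C (det N) * Polynomial.X
  rw [AlgHom.map_det, AlgHom.mapMatrix_apply, hN, det_map_C_updateRow_X_smul]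

theorem prime_killVar_det_mvPolynomialX_sub_one [Nontrivial ι] [IsDomain R]
    [UniqueFactorizationMonoid R] (c : ι × ι) :
    Prime (killVar c (det (mvPolynomialX ι ι R)) - 1) :=
  UniqueFactorizationMonoid.irreducible_iff_prime.mp <|
    irreducible_sub_one_of_map_eq_C_mul_X (scaleVars _).toRingHom (eval_one_scaleVars _)
      (killVar_det_mvPolynomialX_ne_zero c) (scaleVars_killVar_det_mvPolynomialX c)

theorem isPrime_span_det_mvPolynomialX_sub_one_X [Nontrivial ι] [IsDomain R]
    [UniqueFactorizationMonoid R] (c : ι × ι) :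
    (Ideal.span {det (mvPolynomialX ι ι R) - 1, X c}).IsPrime := by
  have h := prime_killVar_det_mvPolynomialX_sub_one (R := R) c
  refine isPrime_span_pair_X_of_isPrime_span_killVar ?_
  rw [map_sub, map_one]
  exact (Ideal.span_singleton_prime h.ne_zero).mpr h

variable (ι R) in
noncomputable def adjugateSubst : MvPolynomial (ι × ι) R →ₐ[R] MvPolynomial (ι × ι) R :=
  aeval fun p => adjugate (mvPolynomialX ι ι R) p.1 p.2

theorem adjugateSubst_X (p : ι × ι) :
    adjugateSubst ι R (X p) = adjugate (mvPolynomialX ι ι R) p.1 p.2 :=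
  aeval_X _ p

theorem mapMatrix_adjugateSubst_mvPolynomialX :
    (adjugateSubst ι R).mapMatrix (mvPolynomialX ι ι R) = adjugate (mvPolynomialX ι ι R) :=
  mvPolynomialX_mapMatrix_aeval R _

theorem adjugateSubst_det :
    adjugateSubst ι R (det (mvPolynomialX ι ι R)) =
      det (mvPolynomialX ι ι R) ^ (Fintype.card ι - 1) := by
  rw [AlgHom.map_det, mapMatrix_adjugateSubst_mvPolynomialX, det_adjugate]

theorem adjugateSubst_adjugateSubst_X [Nontrivial ι] (p : ι × ι) :
    adjugateSubst ι R (adjugateSubst ι R (X p)) =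
      det (mvPolynomialX ι ι R) ^ (Fintype.card ι - 2) * X p := by
  have h : adjugateSubst ι R (adjugate (mvPolynomialX ι ι R) p.1 p.2) =
      (adjugateSubst ι R).mapMatrix (adjugate (mvPolynomialX ι ι R)) p.1 p.2 := rfl
  rw [adjugateSubst_X, h, AlgHom.map_adjugate, mapMatrix_adjugateSubst_mvPolynomialX,
    adjugate_adjugate', smul_apply, smul_eq_mul, mvPolynomialX_apply]

theorem adjugateSubst_adjugateSubst_sub_mem [Nontrivial ι] {I : Ideal (MvPolynomial (ι × ι) R)}
    (hI : det (mvPolynomialX ι ι R) - 1 ∈ I) (a : MvPolynomial (ι × ι) R) :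
    adjugateSubst ι R (adjugateSubst ι R a) - a ∈ I := by
  have hdet : Ideal.Quotient.mk I (det (mvPolynomialX ι ι R)) = 1 := by
    rw [← map_one (Ideal.Quotient.mk I)]
    exact Ideal.Quotient.eq.mpr hI
  have h : (Ideal.Quotient.mkₐ R I).comp ((adjugateSubst ι R).comp (adjugateSubst ι R)) =
      Ideal.Quotient.mkₐ R I := by
    refine algHom_ext fun p => ?_
    simp [adjugateSubst_adjugateSubst_X, hdet]
  exact Ideal.Quotient.eq.mp (AlgHom.congr_fun h a)

theorem det_mvPolynomialX_sub_one_dvd_adjugateSubst :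
    det (mvPolynomialX ι ι R) - 1 ∣ adjugateSubst ι R (det (mvPolynomialX ι ι R) - 1) := by
  simpa [adjugateSubst_det] using sub_dvd_pow_sub_pow (det (mvPolynomialX ι ι R)) 1 _

theorem span_det_sub_one_adjugate_eq_comap [Nontrivial ι] (p : ι × ι) :
    Ideal.span {det (mvPolynomialX ι ι R) - 1, adjugate (mvPolynomialX ι ι R) p.1 p.2} =
      (Ideal.span {det (mvPolynomialX ι ι R) - 1, X p}).comap (adjugateSubst ι R) := by
  have hdvd := det_mvPolynomialX_sub_one_dvd_adjugateSubst (ι := ι) (R := R)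
  apply Ideal.eq_comap_of_map_le_of_sub_mem
  · rw [Ideal.map_span, Set.image_pair, Ideal.span_le, Set.insert_subset_iff,
      Set.singleton_subset_iff, ← adjugateSubst_X, adjugateSubst_adjugateSubst_X]
    exact ⟨Ideal.mem_of_dvd _ hdvd (Ideal.subset_span (Set.mem_insert _ _)),
      Ideal.mul_mem_left _ _ (Ideal.subset_span (Set.mem_insert_of_mem _ rfl))⟩
  · rw [Ideal.map_span, Set.image_pair, Ideal.span_le, Set.insert_subset_iff,
      Set.singleton_subset_iff, adjugateSubst_X]
    exact ⟨Ideal.mem_of_dvd _ hdvd (Ideal.subset_span (Set.mem_insert _ _)),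
      Ideal.subset_span (Set.mem_insert_of_mem _ rfl)⟩
  · exact adjugateSubst_adjugateSubst_sub_mem (Ideal.subset_span (Set.mem_insert _ _))

end Matrix

/-- for an algebraically closed field `K` and `n ≥ 2`, the ideal
`(det - 1, Δ_{n-1})` of `K[Mat_n]` is prime. -/
theorem stmt3 (K : Type*) [Field K] (n : ℕ) (hn : 2 ≤ n) :
    (Ideal.span {genDet K n - 1, genDelta K n (n - 1) (by omega)}).IsPrime := by
  obtain ⟨m, rfl⟩ : ∃ m, n = m + 1 := ⟨n - 1, by omega⟩
  have : Nontrivial (Fin (m + 1)) := Fin.nontrivial_iff_two_le.mpr hn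
  have hΔ : genDelta K (m + 1) (m + 1 - 1) (by omega) =
      Matrix.adjugate (Matrix.mvPolynomialX _ _ K) (Fin.last m) (Fin.last m) := by
    rw [Matrix.adjugate_last_last]
    rfl
  rw [hΔ, genDet, ← Matrix.mvPolynomialX,
    Matrix.span_det_sub_one_adjugate_eq_comap (Fin.last m, Fin.last m)]
  exact (Matrix.isPrime_span_det_mvPolynomialX_sub_one_X _).comap _
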